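/- Let m ≥ 3, let v ∈ ℤ^m be nontrivial (i.e. d(v) > 0), and let n be any integer. Then there exists v' ∈ ℤ^m such that v' ∼_{vP} v (virtual-pure-braid equivalence) and Δ(v') = Δ(v) + 2n·d(v). -/

import Mathlib

/-- Alternating sum `Δ(v) = Σ (-1)^i * v i` (0-indexed; `(-1)^(i-1) a_i` in 1-indexed terms). -/
def Delta {m : ℕ} (v : Fin m → ℤ) : ℤ :=
  ∑ i : Fin m, (-1 : ℤ) ^ (i : ℕ) * v i

/-- `d(v)`: the (nonnegative) gcd of all pairwise differences of the entries of `v`;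
for nonempty `v` this equals `gcd {v i - v 0 : i}`. -/
def dgcd {m : ℕ} (v : Fin m → ℤ) : ℤ :=
  Finset.univ.gcd (fun p : Fin m × Fin m => v p.1 - v p.2)

/-- `M(v)_N`: the multiset of residues of the entries of `v` modulo `N`
(for `N = 0` this is the multiset of the entries themselves). -/
def resM {m : ℕ} (v : Fin m → ℤ) (N : ℤ) : Multiset ℤ :=
  (Finset.univ.val : Multiset (Fin m)).map (fun i => v i % N)

/-- The Hurwitz move `v·σ_i` (0-indexed `i`). -/
def sigmaAct {m : ℕ} (i : Fin (m - 1)) (v : Fin m → ℤ) : Fin m → ℤ :=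
  have h : (i : ℕ) < m - 1 := i.isLt
  fun j =>
    if (j : ℕ) = (i : ℕ) then v ⟨(i : ℕ) + 1, by omega⟩
    else if (j : ℕ) = (i : ℕ) + 1 then
      2 * v ⟨(i : ℕ) + 1, by omega⟩ - v ⟨(i : ℕ), by omega⟩
    else v j

/-- The inverse Hurwitz move `v·σ_i⁻¹` (0-indexed `i`). -/
def sigmaInvAct {m : ℕ} (i : Fin (m - 1)) (v : Fin m → ℤ) : Fin m → ℤ :=
  have h : (i : ℕ) < m - 1 := i.isLt
  fun j =>
    if (j : ℕ) = (i : ℕ) then 2 * v ⟨(i : ℕ), by omega⟩ - v ⟨(i : ℕ) + 1, by omega⟩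
    else if (j : ℕ) = (i : ℕ) + 1 then v ⟨(i : ℕ), by omega⟩
    else v j

/-- The virtual move `v·τ_i`: swap the `i`-th and `(i+1)`-st entries (0-indexed `i`). -/
def tauAct {m : ℕ} (i : Fin (m - 1)) (v : Fin m → ℤ) : Fin m → ℤ :=
  have h : (i : ℕ) < m - 1 := i.isLt
  fun j =>
    if (j : ℕ) = (i : ℕ) then v ⟨(i : ℕ) + 1, by omega⟩
    else if (j : ℕ) = (i : ℕ) + 1 then v ⟨(i : ℕ), by omega⟩
    else v j

/-- Hurwitz equivalence: the equivalence relation on `ℤ^m` generated by `v ∼ v·σ_i`. -/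
def HurwitzEquiv {m : ℕ} : (Fin m → ℤ) → (Fin m → ℤ) → Prop :=
  Relation.EqvGen (fun v w => ∃ i : Fin (m - 1), w = sigmaAct i v)

/-- A letter of a braid word: an index `i` and a sign (`true` = `σ_i`, `false` = `σ_i⁻¹`). -/
abbrev BraidLetter (m : ℕ) := Fin (m - 1) × Bool

/-- Action of a single braid letter. -/
def braidLetterAct {m : ℕ} (l : BraidLetter m) (v : Fin m → ℤ) : Fin m → ℤ :=
  if l.2 then sigmaAct l.1 v else sigmaInvAct l.1 v

/-- Action `v·β` of a braid word (letters applied in order). -/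
def braidWordAct {m : ℕ} (β : List (BraidLetter m)) (v : Fin m → ℤ) : Fin m → ℤ :=
  β.foldl (fun w l => braidLetterAct l w) v

/-- The transposition `(i, i+1)` of `Fin m` associated to the index `i`. -/
def letterPerm {m : ℕ} (i : Fin (m - 1)) : Equiv.Perm (Fin m) :=
  have h : (i : ℕ) < m - 1 := i.isLt
  Equiv.swap ⟨(i : ℕ), by omega⟩ ⟨(i : ℕ) + 1, by omega⟩

/-- The underlying permutation `π_β` of a braid word: the product, composed in
the same order as the letters are applied, of the transpositions `(i, i+1)`. -/
def braidWordPerm {m : ℕ} (β : List (BraidLetter m)) : Equiv.Perm (Fin m) :=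
  β.foldl (fun p l => letterPerm l.1 * p) 1

/-- Pure-braid Hurwitz equivalence: related by a braid word with trivial
underlying permutation. -/
def PureEquiv {m : ℕ} (v w : Fin m → ℤ) : Prop :=
  ∃ β : List (BraidLetter m), braidWordAct β v = w ∧ braidWordPerm β = 1

/-- A letter of a virtual braid word: `(i, none)` = `τ_i`, `(i, some true)` = `σ_i`,
`(i, some false)` = `σ_i⁻¹`. -/
abbrev VBraidLetter (m : ℕ) := Fin (m - 1) × Option Bool

/-- Action of a single virtual braid letter. -/
def vletterAct {m : ℕ} (l : VBraidLetter m) (v : Fin m → ℤ) : Fin m → ℤ :=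
  match l.2 with
  | none => tauAct l.1 v
  | some true => sigmaAct l.1 v
  | some false => sigmaInvAct l.1 v

/-- Action `v·β` of a virtual braid word (letters applied in order). -/
def vwordAct {m : ℕ} (β : List (VBraidLetter m)) (v : Fin m → ℤ) : Fin m → ℤ :=
  β.foldl (fun w l => vletterAct l w) v

/-- The underlying permutation `π_β` of a virtual braid word. -/
def vwordPerm {m : ℕ} (β : List (VBraidLetter m)) : Equiv.Perm (Fin m) :=
  β.foldl (fun p l => letterPerm l.1 * p) 1

/-- Virtual braid equivalence: `w = v·β` for some virtual braid word `β`. -/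
def VirtualEquiv {m : ℕ} (v w : Fin m → ℤ) : Prop :=
  ∃ β : List (VBraidLetter m), vwordAct β v = w

/-- Virtual-pure-braid equivalence: related by a virtual braid word with trivial
underlying permutation. -/
def VPureEquiv {m : ℕ} (v w : Fin m → ℤ) : Prop :=
  ∃ β : List (VBraidLetter m), vwordAct β v = w ∧ vwordPerm β = 1

/-! The pure virtual braid `σ_i τ_i` replaces `a_i` by its reflection `2a_{i+1} - a_i` in `a_{i+1}`;
conjugating by virtual moves, every reflection `a_i ↦ 2a_j - a_i` is realized by a pure virtual
braid. Reflections preserve `d(v)` and `Δ(v)` modulo `2d(v)`, and two of them in a row add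
`2(a_j - a_i)` to a third entry `a_k`. A Euclidean algorithm with these moves produces two entries
differing by exactly `d(v)`; adding a suitable multiple of `2d(v)` to a third entry then moves `Δ`
to any value in its class modulo `2d(v)`. -/

section

variable {m : ℕ}

lemma vwordAct_append (β₁ β₂ : List (VBraidLetter m)) (v : Fin m → ℤ) :
    vwordAct (β₁ ++ β₂) v = vwordAct β₂ (vwordAct β₁ v) :=
  List.foldl_append

lemma foldl_letterPerm_mul (β : List (VBraidLetter m)) (p : Equiv.Perm (Fin m)) :
    β.foldl (fun p l => letterPerm l.1 * p) p = vwordPerm β * p := by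
  induction β generalizing p with
  | nil => exact (one_mul p).symm
  | cons a β ih =>
    rw [List.foldl_cons, ih]
    show _ = List.foldl _ (letterPerm a.1 * 1) β * p
    rw [ih, mul_one, mul_assoc]

lemma vwordPerm_append (β₁ β₂ : List (VBraidLetter m)) :
    vwordPerm (β₁ ++ β₂) = vwordPerm β₂ * vwordPerm β₁ := by
  rw [vwordPerm, List.foldl_append, foldl_letterPerm_mul]
  rfl

lemma vwordPerm_singleton (a : VBraidLetter m) : vwordPerm [a] = letterPerm a.1 :=
  mul_one _

lemma VPureEquiv.refl (v : Fin m → ℤ) : VPureEquiv v v := ⟨[], rfl, rfl⟩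

lemma VPureEquiv.trans {u v w : Fin m → ℤ} (huv : VPureEquiv u v) (hvw : VPureEquiv v w) :
    VPureEquiv u w := by
  obtain ⟨β₁, rfl, hβ₁⟩ := huv
  obtain ⟨β₂, rfl, hβ₂⟩ := hvw
  exact ⟨β₁ ++ β₂, vwordAct_append .., by rw [vwordPerm_append, hβ₁, hβ₂, one_mul]⟩

def IsPureRealizable (f : (Fin m → ℤ) → Fin m → ℤ) : Prop :=
  ∃ β : List (VBraidLetter m), (∀ v, vwordAct β v = f v) ∧ vwordPerm β = 1

lemma tauAct_eq_comp (k : Fin (m - 1)) (v : Fin m → ℤ) : tauAct k v = v ∘ letterPerm k := by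
  funext t
  simp only [tauAct, letterPerm, Function.comp_apply, Equiv.swap_apply_def, Fin.ext_iff]
  split_ifs <;> rfl

lemma IsPureRealizable.conj_letterPerm {f : (Fin m → ℤ) → Fin m → ℤ} (hf : IsPureRealizable f)
    (k : Fin (m - 1)) :
    IsPureRealizable fun v => f (v ∘ letterPerm k) ∘ (letterPerm k).symm := by
  obtain ⟨β, hβ, hβ1⟩ := hf
  refine ⟨[(k, none)] ++ β ++ [(k, none)], fun v => ?_, ?_⟩
  · rw [vwordAct_append, vwordAct_append, hβ]
    show tauAct k (f (tauAct k v)) = _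
    rw [tauAct_eq_comp, tauAct_eq_comp, letterPerm, Equiv.symm_swap]
  · rw [vwordPerm_append, vwordPerm_append, hβ1, vwordPerm_singleton, one_mul]
    exact Equiv.swap_mul_self _ _

lemma IsPureRealizable.conj {f : (Fin m → ℤ) → Fin m → ℤ} (hf : IsPureRealizable f)
    (σ : Equiv.Perm (Fin m)) : IsPureRealizable fun v => f (v ∘ σ) ∘ σ.symm := by
  obtain _ | n := m
  · rwa [Subsingleton.elim σ 1]
  have hσ : σ ∈ Submonoid.closure (Set.range fun i : Fin n ↦ Equiv.swap i.castSucc i.succ) := by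
    rw [Equiv.Perm.mclosure_swap_castSucc_succ]; trivial
  induction hσ using Submonoid.closure_induction generalizing f with
  | mem _ hτ =>
    obtain ⟨i, rfl⟩ := hτ
    exact hf.conj_letterPerm ⟨i, by omega⟩
  | one => exact hf
  | mul σ τ _ _ hσ hτ => exact hσ (hτ hf)

def reflectEntry (i j : Fin m) (v : Fin m → ℤ) : Fin m → ℤ :=
  Function.update v i (2 * v j - v i)

lemma reflectEntry_comp_perm (σ : Equiv.Perm (Fin m)) (i j : Fin m) (v : Fin m → ℤ) :
    reflectEntry i j (v ∘ σ) ∘ σ.symm = reflectEntry (σ i) (σ j) v := by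
  funext t
  simp only [reflectEntry, Function.comp_apply, Function.update_apply, Equiv.symm_apply_eq,
    Equiv.apply_symm_apply]

lemma isPureRealizable_reflectEntry_adjacent (k : Fin (m - 1)) (i j : Fin m) (hi : (i : ℕ) = k)
    (hj : (j : ℕ) = k + 1) : IsPureRealizable (reflectEntry i j) := by
  obtain rfl : i = ⟨k, by clear hi hj; omega⟩ := Fin.ext hi
  obtain rfl : j = ⟨k + 1, by clear hj; omega⟩ := Fin.ext hj
  refine ⟨[(k, some true), (k, none)], fun v => ?_, ?_⟩
  · funext t
    simp only [vwordAct, List.foldl, vletterAct, tauAct, sigmaAct, reflectEntry,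
      Function.update_apply, Fin.ext_iff]
    split_ifs <;> first | rfl | omega | exact congrArg v (Fin.ext (by simp only; omega))
  · exact Equiv.swap_mul_self_mul _ _ 1

lemma exists_perm_apply_eq_and_apply_eq {α : Type*} [DecidableEq α] {a b i j : α} (hab : a ≠ b)
    (hij : i ≠ j) : ∃ σ : Equiv.Perm α, σ a = i ∧ σ b = j := by
  set c := Equiv.swap a i b
  have hci : i ≠ c := by simpa [c] using (Equiv.swap a i).injective.ne hab
  exact ⟨Equiv.swap c j * Equiv.swap a i, by simp [Equiv.swap_apply_of_ne_of_ne hci hij],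
    by simp [c]⟩

lemma isPureRealizable_reflectEntry {i j : Fin m} (hij : i ≠ j) :
    IsPureRealizable (reflectEntry i j) := by
  have hm : 1 < m := by omega
  obtain ⟨σ, rfl, rfl⟩ := exists_perm_apply_eq_and_apply_eq (a := ⟨0, by omega⟩) (b := ⟨1, hm⟩)
    (by simp [Fin.ext_iff]) hij
  have h := isPureRealizable_reflectEntry_adjacent ⟨0, by omega⟩ ⟨0, by omega⟩ ⟨1, hm⟩ rfl rfl
  simpa only [reflectEntry_comp_perm] using h.conj σ

lemma reflectEntry_reflectEntry {i j : Fin m} (hij : i ≠ j) (v : Fin m → ℤ) :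
    reflectEntry i j (reflectEntry i j v) = v := by
  funext t
  by_cases ht : t = i
  · subst ht; simp [reflectEntry, hij.symm]
  · simp [reflectEntry, ht]

lemma reflectEntry_reflectEntry_eq_update {i j k : Fin m} (hkj : k ≠ j) (v : Fin m → ℤ) :
    reflectEntry k j (reflectEntry k i v) = Function.update v k (v k + 2 * (v j - v i)) := by
  simp only [reflectEntry, Function.update_self, Function.update_idem,
    Function.update_of_ne hkj.symm]
  ring_nf

lemma dgcd_dvd_sub (v : Fin m → ℤ) (i j : Fin m) : dgcd v ∣ v i - v j :=
  Finset.gcd_dvd (Finset.mem_univ (i, j))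

lemma dvd_dgcd {v : Fin m → ℤ} {c : ℤ} (h : ∀ i j, c ∣ v i - v j) : c ∣ dgcd v :=
  Finset.dvd_gcd fun p _ => h p.1 p.2

lemma dgcd_nonneg (v : Fin m → ℤ) : 0 ≤ dgcd v :=
  Int.nonneg_of_normalize_eq_self Finset.normalize_gcd

lemma dgcd_dvd_reflectEntry_sub (i j : Fin m) (v : Fin m → ℤ) (a : Fin m) :
    dgcd v ∣ reflectEntry i j v a - v a := by
  by_cases ha : a = i
  · subst ha
    have h : reflectEntry a j v a - v a = 2 * (v j - v a) := by simp [reflectEntry]; ring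
    exact h ▸ dvd_mul_of_dvd_right (dgcd_dvd_sub v j a) 2
  · simp [reflectEntry, ha]

lemma dgcd_dvd_dgcd_reflectEntry (i j : Fin m) (v : Fin m → ℤ) :
    dgcd v ∣ dgcd (reflectEntry i j v) :=
  dvd_dgcd fun a b => by
    have := dvd_add (dvd_sub (dgcd_dvd_reflectEntry_sub i j v a)
      (dgcd_dvd_reflectEntry_sub i j v b)) (dgcd_dvd_sub v a b)
    rwa [sub_sub_sub_comm, sub_add_cancel] at this

lemma dgcd_reflectEntry {i j : Fin m} (hij : i ≠ j) (v : Fin m → ℤ) :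
    dgcd (reflectEntry i j v) = dgcd v := by
  refine Int.dvd_antisymm (dgcd_nonneg _) (dgcd_nonneg _) ?_ (dgcd_dvd_dgcd_reflectEntry i j v)
  simpa only [reflectEntry_reflectEntry hij] using
    dgcd_dvd_dgcd_reflectEntry i j (reflectEntry i j v)

lemma Delta_update (v : Fin m → ℤ) (k : Fin m) (x : ℤ) :
    Delta (Function.update v k x) = Delta v + (-1) ^ (k : ℕ) * (x - v k) := by
  rw [Delta, Delta, ← sub_eq_iff_eq_add', ← Finset.sum_sub_distrib,
    Finset.sum_eq_single_of_mem k (Finset.mem_univ k) fun t _ htk => by simp [htk]]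
  simp [mul_sub]

def ReflectionReachable : (Fin m → ℤ) → (Fin m → ℤ) → Prop :=
  Relation.ReflTransGen fun v w => ∃ i j, i ≠ j ∧ w = reflectEntry i j v

namespace ReflectionReachable

lemma vPureEquiv {v w : Fin m → ℤ} (h : ReflectionReachable v w) : VPureEquiv w v := by
  induction h with
  | refl => exact VPureEquiv.refl v
  | tail _ hstep ih =>
    obtain ⟨i, j, hij, rfl⟩ := hstep
    obtain ⟨β, hβ, hβ1⟩ := isPureRealizable_reflectEntry hij
    exact VPureEquiv.trans ⟨β, by rw [hβ, reflectEntry_reflectEntry hij], hβ1⟩ ih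

lemma update_add_two_mul_sub {i j k : Fin m} (hki : k ≠ i) (hkj : k ≠ j) (v : Fin m → ℤ) :
    ReflectionReachable v (Function.update v k (v k + 2 * (v j - v i))) :=
  reflectEntry_reflectEntry_eq_update hkj v ▸
    (Relation.ReflTransGen.single ⟨k, i, hki, rfl⟩).tail ⟨k, j, hkj, rfl⟩

lemma update_add_two_mul {i j k : Fin m} (hki : k ≠ i) (hkj : k ≠ j) (v : Fin m → ℤ) (t : ℤ) :
    ReflectionReachable v (Function.update v k (v k + 2 * t * (v j - v i))) := by
  induction t using Int.induction_on with
  | zero =>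
    rw [mul_zero, zero_mul, add_zero, Function.update_eq_self]
    exact Relation.ReflTransGen.refl
  | succ t ih =>
    have := ih.trans (update_add_two_mul_sub hki hkj _)
    simp only [Function.update_self, Function.update_idem, Function.update_of_ne hki.symm,
      Function.update_of_ne hkj.symm] at this
    rwa [show v k + 2 * (t + 1 : ℤ) * (v j - v i) = v k + 2 * t * (v j - v i) + 2 * (v j - v i)
      by ring]
  | pred t ih =>
    have := ih.trans (update_add_two_mul_sub hkj hki _)
    simp only [Function.update_self, Function.update_idem, Function.update_of_ne hki.symm,
      Function.update_of_ne hkj.symm] at this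
    rwa [show v k + 2 * (-t - 1 : ℤ) * (v j - v i) = v k + 2 * -t * (v j - v i) + 2 * (v i - v j)
      by ring]

lemma dgcd_eq {v w : Fin m → ℤ} (h : ReflectionReachable v w) : dgcd w = dgcd v := by
  induction h with
  | refl => rfl
  | tail _ hstep ih =>
    obtain ⟨i, j, hij, rfl⟩ := hstep
    rw [dgcd_reflectEntry hij, ih]

lemma two_mul_dgcd_dvd_Delta_sub {v w : Fin m → ℤ} (h : ReflectionReachable v w) :
    2 * dgcd v ∣ Delta w - Delta v := by
  induction h with
  | refl => simp
  | @tail u _ hvu hstep ih =>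
    obtain ⟨i, j, hij, rfl⟩ := hstep
    have hΔ : Delta (reflectEntry i j u) - Delta u = (-1) ^ (i : ℕ) * (2 * (u j - u i)) := by
      rw [reflectEntry, Delta_update]; ring
    have hdvd : 2 * dgcd v ∣ 2 * (u j - u i) :=
      mul_dvd_mul_left 2 (dgcd_eq hvu ▸ dgcd_dvd_sub u j i)
    have := dvd_add (hdvd.mul_left ((-1) ^ (i : ℕ))) ih
    rwa [← hΔ, sub_add_sub_cancel] at this

end ReflectionReachable

lemma Int.exists_ne_zero_natAbs_lt_of_not_dvd {e D : ℤ} (he : e ≠ 0) (hD : ¬ e ∣ D) :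
    ∃ t : ℤ, D + 2 * t * e ≠ 0 ∧ (D + 2 * t * e).natAbs < e.natAbs := by
  set r := D.bmod (2 * e.natAbs)
  have hpos : 0 < 2 * e.natAbs := by omega
  have hr := Int.le_bmod (x := D) hpos
  have hr' := Int.bmod_lt (x := D) hpos
  obtain ⟨t, ht⟩ : 2 * e ∣ r - D := by
    rw [← Int.natAbs_dvd, Int.natAbs_mul]; exact Int.dvd_bmod_sub_self
  have hrt : D + 2 * t * e = r := by linear_combination -ht
  have hr0 : r ≠ 0 := fun h0 => hD ⟨-2 * t, by linear_combination h0 - ht⟩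
  have hre : r ≠ -e.natAbs := fun he' =>
    hD (by rw [show D = -e.natAbs - 2 * e * t by linear_combination he' - ht]
           exact dvd_sub (Int.dvd_natAbs.mpr dvd_rfl).neg_right ((dvd_mul_left e 2).mul_right t))
  refine ⟨t, hrt ▸ hr0, ?_⟩
  rw [hrt]
  omega

lemma exists_reflectionReachable_sub_eq_dgcd {v : Fin m → ℤ} {i j : Fin m} (hij : v j ≠ v i) :
    ∃ w, ReflectionReachable v w ∧ ∃ i j, w j - w i = dgcd v := by
  induction h : (v j - v i).natAbs using Nat.strong_induction_on generalizing v i j with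
  | _ n ih =>
  by_cases hdiv : ∀ k, v j - v i ∣ v k - v i
  · have habs : (dgcd v).natAbs = (v j - v i).natAbs :=
      Int.natAbs_eq_of_dvd_dvd (dgcd_dvd_sub v j i)
        (dvd_dgcd fun a b => by simpa using dvd_sub (hdiv a) (hdiv b))
    have := dgcd_nonneg v
    rcases le_total 0 (v j - v i) with hpos | hneg
    · exact ⟨v, .refl, i, j, by omega⟩
    · exact ⟨v, .refl, j, i, by omega⟩
  obtain ⟨k, hk⟩ := not_forall.1 hdiv
  have hki : k ≠ i := by rintro rfl; simp at hk
  have hkj : k ≠ j := by rintro rfl; exact hk dvd_rfl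
  obtain ⟨t, ht0, htlt⟩ := Int.exists_ne_zero_natAbs_lt_of_not_dvd (sub_ne_zero.2 hij) hk
  have hpump := ReflectionReachable.update_add_two_mul hki hkj v t
  set w := Function.update v k (v k + 2 * t * (v j - v i))
  have hw : w k - w i = v k - v i + 2 * t * (v j - v i) := by
    simp only [w, Function.update_self, Function.update_of_ne hki.symm]; ring
  obtain ⟨w', hww', hw'⟩ := ih _ (h ▸ hw ▸ htlt) (sub_ne_zero.1 (hw ▸ ht0)) rfl
  exact ⟨w', hpump.trans hww', ReflectionReachable.dgcd_eq hpump ▸ hw'⟩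

end

/-- for nontrivial `v ∈ ℤ^m` (`m ≥ 3`) and any integer `n`, there is
`v' ∼_{vP} v` with `Δ(v') = Δ(v) + 2n·d(v)`. -/
theorem stmt_17 (m : ℕ) (hm : 3 ≤ m) (v : Fin m → ℤ) (hv : 0 < dgcd v) (n : ℤ) :
    ∃ v' : Fin m → ℤ, VPureEquiv v' v ∧ Delta v' = Delta v + 2 * n * dgcd v := by
  obtain ⟨i, j, hij⟩ : ∃ i j, v j ≠ v i := by
    by_contra! h
    exact hv.ne' (Finset.gcd_eq_zero_iff.2 fun p _ => sub_eq_zero.2 (h p.2 p.1))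
  obtain ⟨w, hvw, i, j, hw⟩ := exists_reflectionReachable_sub_eq_dgcd hij
  obtain ⟨s, hs⟩ := hvw.two_mul_dgcd_dvd_Delta_sub
  obtain ⟨k, hki, hkj⟩ := Fin.exists_ne_and_ne_of_two_lt i j (by omega)
  -- the factor `(-1) ^ k` cancels the sign with which the `k`-th entry enters `Δ`
  have hwv' := ReflectionReachable.update_add_two_mul hki hkj w ((-1) ^ (k : ℕ) * (n - s))
  refine ⟨_, ReflectionReachable.vPureEquiv (hvw.trans hwv'), ?_⟩
  rw [Delta_update, hw, add_sub_cancel_left, eq_add_of_sub_eq hs]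
  linear_combination (2 * (n - s) * dgcd v) * (Even.neg_one_pow (α := ℤ) (even_two_mul (k : ℕ)))
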